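/- arXiv:1512.05251 — 6 statements merged into one kernel-verified Lean document; each statement's English description precedes it below -/
import Mathlib

section
/- Let V = F_{q^t}^r viewed as an F_q-vector space, and let D be the Desarguesian t-spread {F_{q^t}·v : v ∈ V, v ≠ 0} (the set of 1-dimensional F_{q^t}-subspaces viewed as F_q-subspaces). If U is an F_q-subspace of V that is scattered with respect to D, then dim_{F_q} U ≤ rt/2. -/
open Module

/-- Upper bound for scattered subspaces with respect to the Desarguesian spread:
if `U` is an `F_q`-subspace of `F_{q^t}^r` scattered with respect to the Desarguesian
`t`-spread `{F_{q^t}·v : v ≠ 0}`, then `dim_{F_q} U ≤ rt/2`. -/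
theorem stmt6 (K L : Type*) [Field K] [Field L] [Algebra K L] [Fintype K]
    (r t : ℕ) (hr : 2 ≤ r) (ht : 2 ≤ t) (hKL : finrank K L = t)
    (U : Submodule K (Fin r → L))
    (hscat : ∀ v : Fin r → L, v ≠ 0 →
      finrank K ↥(U ⊓ (Submodule.span L {v}).restrictScalars K) ≤ 1) :
    2 * finrank K U ≤ r * t := by
  have hfdL : FiniteDimensional K L := by
    apply FiniteDimensional.of_finrank_pos
    omega
  have hfdV : FiniteDimensional K (Fin r → L) := by infer_instance
  -- choose λ ∈ L not in the image of K
  have hbot : (⊥ : Subalgebra K L) ≠ ⊤ := by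
    intro h
    have := Subalgebra.bot_eq_top_iff_finrank_eq_one.mp h
    omega
  obtain ⟨l, hl⟩ : ∃ l : L, l ∉ (⊥ : Subalgebra K L) := by
    by_contra h
    push_neg at h
    exact hbot (eq_top_iff.mpr fun x _ => h x)
  have hl' : ∀ c : K, algebraMap K L c ≠ l := by
    intro c hc
    exact hl (hc ▸ (Subalgebra.algebraMap_mem ⊥ c))
  have hl0 : l ≠ 0 := by
    intro h
    exact hl' 0 (by simp [h])
  -- the K-linear map "multiplication by l"
  set f : (Fin r → L) →ₗ[K] (Fin r → L) :=
    (LinearMap.lsmul L (Fin r → L) l).restrictScalars K with hf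
  have hfapp : ∀ x : Fin r → L, f x = l • x := fun x => rfl
  have hinj : Function.Injective f := by
    intro x y hxy
    have : l • x = l • y := hxy
    exact smul_right_injective _ hl0 this
  set W : Submodule K (Fin r → L) := U.map f with hW
  have hWrank : finrank K W = finrank K U :=
    (LinearEquiv.finrank_eq (Submodule.equivMapOfInjective f hinj U)).symm
  -- U ⊓ W = ⊥
  have hinf : U ⊓ W = ⊥ := by
    rw [eq_bot_iff]
    intro x hx
    obtain ⟨hxU, u, huU, hux⟩ := hx
    simp only [Submodule.mem_bot]
    rw [hfapp] at hux
    by_cases hu0 : u = 0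
    · rw [← hux, hu0, smul_zero]
    -- the spread element through u
    have hP := hscat u hu0
    set P := U ⊓ (Submodule.span L {u}).restrictScalars K with hPdef
    have huP : u ∈ P :=
      ⟨huU, Submodule.mem_span_singleton_self u⟩
    have hxP : x ∈ P := by
      refine ⟨hxU, ?_⟩
      show x ∈ Submodule.span L {u}
      rw [Submodule.mem_span_singleton]
      exact ⟨l, hux⟩
    -- P has finrank ≤ 1 and contains u ≠ 0, so x is a K-multiple of u
    obtain ⟨v, hv⟩ := finrank_le_one_iff.mp hP
    obtain ⟨c, hc⟩ := hv ⟨u, huP⟩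
    obtain ⟨d, hd⟩ := hv ⟨x, hxP⟩
    have hc0 : c ≠ 0 := by
      intro h
      apply hu0
      have := congrArg Subtype.val hc
      simp [h] at this
      exact this.symm
    -- x = (d/c) • u
    have hx_eq : x = (d / c) • u := by
      have hcv : (v : Fin r → L) = c⁻¹ • u := by
        have := congrArg Subtype.val hc
        simp only [Submodule.coe_smul] at this
        rw [← this, smul_smul, inv_mul_cancel₀ hc0, one_smul]
      have := congrArg Subtype.val hd
      simp only [Submodule.coe_smul] at this
      rw [← this, hcv, smul_smul, div_eq_mul_inv]
    -- combine with x = l • u to get l ∈ K, contradiction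
    exfalso
    apply hl' (d / c)
    rw [hx_eq] at hux
    have hpt : ∀ i, l * u i = algebraMap K L (d / c) * u i := by
      intro i
      have h1 := congrFun hux i
      simpa [Pi.smul_apply, Algebra.smul_def] using h1
    obtain ⟨i, hi⟩ := Function.ne_iff.mp hu0
    have := hpt i
    simp only [Pi.zero_apply] at hi
    exact (mul_right_cancel₀ hi this).symm
  -- conclude by dimension count
  have hsum := Submodule.finrank_sup_add_finrank_inf_eq U W
  rw [hinf] at hsum
  simp only [finrank_bot, add_zero] at hsum
  have hle : finrank K ↥(U ⊔ W) ≤ finrank K (Fin r → L) :=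
    Submodule.finrank_le _
  have hVrank : finrank K (Fin r → L) = r * t := by
    rw [← hKL]
    have h1 : finrank K (Fin r → L) = finrank K L * finrank L (Fin r → L) :=
      (Module.finrank_mul_finrank K L (Fin r → L)).symm
    rw [h1, finrank_pi L]
    simp [mul_comm]
  omega
end

section
/- Let q be a prime power and t ≥ 1, and let V = F_{q^t}^2 viewed as a 2t-dimensional F_q-vector space. The subspace U = {(x, x^q) : x ∈ F_{q^t}} is an F_q-subspace of dimension t that is scattered with respect to the Desarguesian spread, i.e., for every nonzero v ∈ V, dim_{F_q}(U ∩ F_{q^t}·v) ≤ 1. -/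
open Module

theorem aux_mem_range {K L : Type*} [Field K] [Field L] [Algebra K L] [Fintype K]
    (c : L) (hc : c ^ Fintype.card K = c) : ∃ k : K, algebraMap K L k = c := by
  classical
  set q := Fintype.card K with hq
  have hq1 : 1 < q := Fintype.one_lt_card
  set P : Polynomial L := Polynomial.X ^ q - Polynomial.X with hP
  have hPne : P ≠ 0 := FiniteField.X_pow_card_sub_X_ne_zero L hq1
  have hroot : ∀ x : L, x ^ q = x → x ∈ P.roots.toFinset := by
    intro x hx
    simp [Multiset.mem_toFinset, Polynomial.mem_roots hPne, hP, Polynomial.IsRoot,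
      sub_eq_zero, hx]
    exact sub_ne_zero.mp hPne
  have hdeg : P.natDegree = q := FiniteField.X_pow_card_sub_X_natDegree_eq L hq1
  have hcard : P.roots.toFinset.card ≤ q := by
    calc P.roots.toFinset.card ≤ Multiset.card P.roots := P.roots.toFinset_card_le
    _ ≤ P.natDegree := P.card_roots'
    _ = q := hdeg
  have hinj : Function.Injective (algebraMap K L) := (algebraMap K L).injective
  set S : Finset L := Finset.univ.image (algebraMap K L) with hS
  have hScard : S.card = q := by
    rw [hS, Finset.card_image_of_injective _ hinj, Finset.card_univ]
  have hSsub : S ⊆ P.roots.toFinset := by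
    intro x hx
    rw [hS, Finset.mem_image] at hx
    obtain ⟨k, -, rfl⟩ := hx
    apply hroot
    rw [← map_pow, FiniteField.pow_card]
  by_contra h
  push_neg at h
  have hcS : c ∉ S := by
    rw [hS, Finset.mem_image]; rintro ⟨k, -, rfl⟩; exact h k rfl
  have : (insert c S).card ≤ q := by
    refine le_trans (Finset.card_le_card ?_) hcard
    intro x hx
    rcases Finset.mem_insert.mp hx with rfl | hx
    · exact hroot x hc
    · exact hSsub hx
  rw [Finset.card_insert_of_notMem hcS, hScard] at this
  omega

/-- The subspace `U = {(x, x^q) : x ∈ F_{q^t}}` of `F_{q^t}^2` is a `t`-dimensional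
`F_q`-subspace which is scattered with respect to the Desarguesian spread. -/
theorem stmt7 (K L : Type*) [Field K] [Field L] [Algebra K L] [Fintype K]
    (t : ℕ) (ht : 1 ≤ t) (hKL : finrank K L = t)
    (U : Submodule K (L × L))
    (hU : (U : Set (L × L)) = {p | ∃ x : L, p = (x, x ^ Fintype.card K)}) :
    finrank K U = t ∧
    ∀ v : L × L, v ≠ 0 →
      finrank K ↥(U ⊓ (Submodule.span L {v}).restrictScalars K) ≤ 1 := by
  classical
  set q := Fintype.card K with hq
  -- characteristic
  obtain ⟨p, hp⟩ := CharP.exists K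
  have hpp : p.Prime := by
    obtain ⟨n, hn, -⟩ := FiniteField.card K p
    exact hn
  haveI : CharP L p := charP_of_injective_algebraMap (algebraMap K L).injective p
  obtain ⟨n, hpn, hqpn⟩ := FiniteField.card K p
  -- the K-linear map x ↦ (x, x^q)
  have hadd : ∀ x y : L, (x + y) ^ q = x ^ q + y ^ q := by
    intro x y
    rw [hq, hqpn]
    haveI : Fact p.Prime := ⟨hpp⟩
    exact add_pow_char_pow x y p n
  have hsmul : ∀ (k : K) (x : L), (k • x) ^ q = k • x ^ q := by
    intro k x
    rw [Algebra.smul_def, Algebra.smul_def, mul_pow, ← map_pow, FiniteField.pow_card]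
  let e : L →ₗ[K] L × L :=
    { toFun := fun x => (x, x ^ q)
      map_add' := fun x y => by simp [hadd x y, Prod.ext_iff]
      map_smul' := fun k x => by simp [hsmul k x, Prod.ext_iff, Prod.smul_mk] }
  have hrange : LinearMap.range e = U := by
    apply le_antisymm
    · rintro _ ⟨x, rfl⟩
      show (x, x ^ q) ∈ (U : Set (L × L))
      rw [hU]; exact ⟨x, rfl⟩
    · intro u hu
      have : u ∈ (U : Set (L × L)) := hu
      rw [hU] at this
      obtain ⟨x, rfl⟩ := this
      exact ⟨x, rfl⟩
  have hinj : Function.Injective e := by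
    intro x y hxy
    have := congrArg Prod.fst hxy
    exact this
  constructor
  · rw [← hrange, LinearMap.finrank_range_of_inj hinj, hKL]
  · intro v hv
    set S := U ⊓ (Submodule.span L {v}).restrictScalars K with hSdef
    by_cases hbot : S = ⊥
    · rw [hbot]; simp
    · obtain ⟨s₀, hs₀S, hs₀ne⟩ := Submodule.exists_mem_ne_zero_of_ne_bot hbot
      apply finrank_le_one (⟨s₀, hs₀S⟩ : S)
      rintro ⟨s, hsS⟩
      -- decompose s₀ and s
      have hs₀U : s₀ ∈ (U : Set (L × L)) := hs₀S.1
      have hsU : s ∈ (U : Set (L × L)) := hsS.1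
      rw [hU] at hs₀U hsU
      obtain ⟨x₀, rfl⟩ := hs₀U
      obtain ⟨x, rfl⟩ := hsU
      have hx₀ne : x₀ ≠ 0 := by
        rintro rfl; apply hs₀ne; simp; exact Fintype.card_ne_zero
      have hs₀span : (x₀, x₀ ^ q) ∈ Submodule.span L {v} := hs₀S.2
      have hsspan : (x, x ^ q) ∈ Submodule.span L {v} := hsS.2
      rw [Submodule.mem_span_singleton] at hs₀span hsspan
      obtain ⟨μ₀, hμ₀⟩ := hs₀span
      obtain ⟨μ, hμ⟩ := hsspan
      have hμ₀ne : μ₀ ≠ 0 := by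
        rintro rfl; apply hs₀ne; simp at hμ₀; exact hμ₀.symm
      set c : L := μ * μ₀⁻¹ with hc
      have hcs : c • (x₀, x₀ ^ q) = (x, x ^ q) := by
        rw [← hμ₀, ← hμ, smul_smul, hc, mul_assoc, inv_mul_cancel₀ hμ₀ne, mul_one]
      have hcx : c * x₀ = x := congrArg Prod.fst hcs
      have hcxq : c * x₀ ^ q = x ^ q := congrArg Prod.snd hcs
      have hcq : c ^ q = c := by
        have h1 : (c * x₀) ^ q = c * x₀ ^ q := by rw [hcx, hcxq]
        rw [mul_pow] at h1
        have hx₀q : x₀ ^ q ≠ 0 := pow_ne_zero _ hx₀ne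
        exact mul_right_cancel₀ hx₀q h1
      obtain ⟨k, hk⟩ := aux_mem_range c hcq
      refine ⟨k, ?_⟩
      apply Subtype.ext
      show k • (x₀, x₀ ^ q) = (x, x ^ q)
      rw [← hcs, ← hk]
      ext <;> simp [Algebra.smul_def]
end

section
/- Let V = F_{q^t}^r (r even) considered as an F_q-vector space, with Desarguesian spread D = {F_{q^t}·v : v ≠ 0}. Then there exists an F_q-subspace U of V with dim_{F_q} U = rt/2 that is scattered with respect to D. -/
open Module
open Polynomial in

lemma fixed_pt (K L : Type*) [Field K] [Field L] [Algebra K L] [Fintype K]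
    [FiniteDimensional K L] (x : L) (hx : x ^ Fintype.card K = x) :
    ∃ c : K, algebraMap K L c = x := by
  have : Finite L := Module.finite_of_finite K
  have : Fintype L := Fintype.ofFinite L
  classical
  set q := Fintype.card K with hq
  have hq1 : 1 < q := Fintype.one_lt_card
  have hne : (X ^ q - X : L[X]) ≠ 0 := FiniteField.X_pow_card_sub_X_ne_zero L hq1
  let S : Finset L := (X ^ q - X : L[X]).roots.toFinset
  have hmem : ∀ y : L, y ^ q = y → y ∈ S := by
    intro y hy
    simp only [S, Multiset.mem_toFinset, mem_roots hne, IsRoot.def, eval_sub, eval_pow, eval_X]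
    exact sub_eq_zero.mpr hy
  have hcardS : S.card ≤ q := by
    calc S.card ≤ Multiset.card (X ^ q - X : L[X]).roots := (X ^ q - X : L[X]).roots.toFinset_card_le
    _ ≤ (X ^ q - X : L[X]).natDegree := (X ^ q - X : L[X]).card_roots'
    _ = q := FiniteField.X_pow_card_sub_X_natDegree_eq L hq1
  let f : K → S := fun c => ⟨algebraMap K L c, hmem _ (by rw [← map_pow, FiniteField.pow_card])⟩
  have hf : Function.Injective f := fun a b hab =>
    (algebraMap K L).injective (Subtype.ext_iff.mp hab)
  have hcard : Fintype.card K = Fintype.card S := by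
    have h1 : q ≤ Fintype.card S := Fintype.card_le_of_injective f hf
    have h2 : Fintype.card S = S.card := Fintype.card_coe S
    omega
  have hsurj : Function.Surjective f :=
    ((Fintype.bijective_iff_injective_and_card f).mpr ⟨hf, hcard⟩).2
  obtain ⟨c, hc⟩ := hsurj ⟨x, hmem x hx⟩
  exact ⟨c, Subtype.ext_iff.mp hc⟩

/-- For even `r`, there exists an `F_q`-subspace of `F_{q^t}^r` of dimension `rt/2`
scattered with respect to the Desarguesian spread. -/
theorem stmt9 (K L : Type*) [Field K] [Field L] [Algebra K L] [Fintype K]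
    (r t : ℕ) (hr : 2 ≤ r) (hre : Even r) (ht : 1 ≤ t) (hKL : finrank K L = t) :
    ∃ U : Submodule K (Fin r → L),
      2 * finrank K U = r * t ∧
      ∀ v : Fin r → L, v ≠ 0 →
        finrank K ↥(U ⊓ (Submodule.span L {v}).restrictScalars K) ≤ 1 := by
  classical
  obtain ⟨m, hm⟩ := hre
  have hFD : FiniteDimensional K L := FiniteDimensional.of_finrank_pos (by omega)
  set q := Fintype.card K with hq
  -- characteristic setup
  set p := ringChar K with hp
  have hpprime : p.Prime := CharP.char_is_prime K p
  haveI : Fact p.Prime := ⟨hpprime⟩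
  haveI hCL : CharP L p := charP_of_injective_algebraMap (algebraMap K L).injective p
  haveI : ExpChar L p := ExpChar.prime hpprime
  obtain ⟨n, hn⟩ := FiniteField.card K p
  -- Frobenius as a K-linear map
  let φ : L →ₗ[K] L :=
    { toFun := fun z => z ^ q
      map_add' := by
        intro a b
        simp only [hq, hn, add_pow_char_pow]
      map_smul' := by
        intro c z
        simp only [RingHom.id_apply, Algebra.smul_def, mul_pow, ← map_pow, hq,
          FiniteField.pow_card] }
  let T : (Fin m → L) →ₗ[K] (Fin r → L) :=
    LinearMap.pi fun i : Fin r =>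
      if h : (i : ℕ) < m then LinearMap.proj (⟨i, h⟩ : Fin m)
      else φ ∘ₗ LinearMap.proj (⟨(i : ℕ) - m, by have := i.isLt; omega⟩ : Fin m)
  have key : ∀ (x : Fin m → L) (j : Fin m) (k : ℕ) (h : k < m), k = (j : ℕ) →
      x ⟨k, h⟩ = x j := by
    rintro x j k h rfl; rfl
  have hT1 : ∀ (x : Fin m → L) (j : Fin m), T x ⟨j.1, by omega⟩ = x j := by
    intro x j
    simp only [T, LinearMap.pi_apply]
    rw [dif_pos (show ((⟨j.1, by omega⟩ : Fin r) : ℕ) < m from j.isLt)]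
    rfl
  have hT2 : ∀ (x : Fin m → L) (j : Fin m), T x ⟨m + j.1, by omega⟩ = (x j) ^ q := by
    intro x j
    simp only [T, LinearMap.pi_apply]
    rw [dif_neg (show ¬ ((⟨m + j.1, by omega⟩ : Fin r) : ℕ) < m by simp)]
    exact congrArg (fun z => z ^ q) (key x j _ _ (by simp))
  have hTinj : Function.Injective T := by
    rw [← LinearMap.ker_eq_bot, eq_bot_iff]
    intro x hx
    simp only [LinearMap.mem_ker] at hx
    have : x = 0 := by
      funext j
      have := hT1 x j
      rw [hx] at this
      exact this.symm
    simp [this]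
  refine ⟨LinearMap.range T, ?_, ?_⟩
  · have h1 : finrank K ↥(LinearMap.range T) = finrank K (Fin m → L) :=
      LinearMap.finrank_range_of_inj hTinj
    have h2 : finrank K (Fin m → L) = m * t := by
      rw [Module.finrank_pi_fintype, hKL]
      simp [Finset.sum_const, mul_comm]
    rw [h1, h2, hm]; ring
  · intro v hv
    set W := LinearMap.range T ⊓ (Submodule.span L {v}).restrictScalars K with hW
    by_cases hWbot : W = ⊥
    · rw [hWbot]; simp
    · obtain ⟨w0, hw0W, hw0ne⟩ := Submodule.ne_bot_iff W |>.mp hWbot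
      have hle : W ≤ Submodule.span K {w0} := by
        intro w hw
        obtain ⟨x, hx⟩ := hw0W.1
        obtain ⟨y, hy⟩ := hw.1
        have hw0v : w0 ∈ Submodule.span L {v} := hw0W.2
        have hwv : w ∈ Submodule.span L {v} := hw.2
        obtain ⟨a, ha⟩ := Submodule.mem_span_singleton.mp hw0v
        obtain ⟨b, hb⟩ := Submodule.mem_span_singleton.mp hwv
        have hane : a ≠ 0 := by rintro rfl; simp at ha; exact hw0ne ha.symm
        set lam := b * a⁻¹ with hlamdef
        have hlam : w = lam • w0 := by
          rw [← ha, ← hb, smul_smul, hlamdef]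
          field_simp
        have hxne : x ≠ 0 := by
          rintro rfl; rw [map_zero] at hx; exact hw0ne hx.symm
        obtain ⟨j, hj⟩ := Function.ne_iff.mp hxne
        have hcoord : ∀ i : Fin r, w i = lam * w0 i := by
          intro i; rw [hlam]; simp
        have e1 : y j = lam * x j := by
          have := hcoord ⟨j.1, by omega⟩
          rw [← hx, ← hy, hT1, hT1] at this
          exact this
        have e2 : (y j) ^ q = lam * (x j) ^ q := by
          have := hcoord ⟨m + j.1, by omega⟩
          rw [← hx, ← hy, hT2, hT2] at this
          exact this
        have hfix : lam ^ q = lam := by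
          have h3 : lam ^ q * (x j) ^ q = lam * (x j) ^ q := by
            rw [← mul_pow, ← e1, e2]
          exact mul_right_cancel₀ (pow_ne_zero q (by simpa using hj)) h3
        obtain ⟨c, hc⟩ := fixed_pt K L lam hfix
        have : w = c • w0 := by rw [hlam, ← hc, algebraMap_smul]
        rw [this]
        exact Submodule.smul_mem _ _ (Submodule.mem_span_singleton_self w0)
      calc finrank K ↥W ≤ finrank K ↥(Submodule.span K {w0}) := Submodule.finrank_mono hle
        _ = 1 := finrank_span_singleton hw0ne
end

section
/- Let U be an F_q-subspace of V = F_{q^t}^r of dimension rt/2 (assume rt even) that is scattered with respect to the Desarguesian spread. Then for every F_{q^t}-hyperplane H of V (an (r-1)-dimensional F_{q^t}-subspace), dim_{F_q}(U ∩ H) equals rt/2 - t or rt/2 - t + 1. Consequently B(U) is a two-intersection set with respect to hyperplanes of PG(r-1, q^t), with intersection numbers (q^{rt/2 - t} - 1)/(q - 1) and (q^{rt/2 - t + 1} - 1)/(q - 1). -/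
open Module Finset

section CardAux

variable {K V : Type*} [Field K] [Fintype K] [AddCommGroup V] [Module K V]
  [Fintype V]

lemma card_filter_mem_submodule (W : Submodule K V) [DecidablePred (· ∈ W)] :
    (Finset.univ.filter (· ∈ W)).card = Fintype.card K ^ finrank K W := by
  rw [← Fintype.card_subtype]
  exact card_eq_pow_finrank

lemma card_filter_mem_submodule_ne [DecidableEq V] (W : Submodule K V)
    [DecidablePred (· ∈ W)] :
    (Finset.univ.filter (fun u => u ∈ W ∧ u ≠ 0)).card
      = Fintype.card K ^ finrank K W - 1 := by
  have h : Finset.univ.filter (fun u => u ∈ W ∧ u ≠ 0)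
      = (Finset.univ.filter (· ∈ W)).erase 0 := by
    ext u
    simp [Finset.mem_erase, and_comm]
  rw [h, Finset.card_erase_of_mem (by simp [W.zero_mem]), card_filter_mem_submodule]

end CardAux

section Dot

variable {L : Type*} [Field L] {r : ℕ}

/-- The linear functional `x ↦ ∑ i, x i * v i` on `Fin r → L`. -/
noncomputable def dm (v : Fin r → L) : (Fin r → L) →ₗ[L] L where
  toFun x := ∑ i, x i * v i
  map_add' x y := by simp [add_mul, Finset.sum_add_distrib]
  map_smul' a x := by simp [Finset.mul_sum, mul_assoc]

lemma dm_symm (v x : Fin r → L) : dm v x = dm x v := by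
  simp [dm, mul_comm]

lemma dm_single (v : Fin r → L) (i : Fin r) (a : L) :
    dm v (Pi.single i a) = a * v i := by
  simp [dm, Pi.single_apply, ite_mul]

lemma dm_surjective (v : Fin r → L) (hv : v ≠ 0) : Function.Surjective (dm v) := by
  obtain ⟨i, hi⟩ : ∃ i, v i ≠ 0 := by
    by_contra h
    push_neg at h
    exact hv (funext h)
  intro a
  exact ⟨Pi.single i (a * (v i)⁻¹), by rw [dm_single, mul_assoc, inv_mul_cancel₀ hi, mul_one]⟩

lemma finrank_ker_dm (v : Fin r → L) (hv : v ≠ 0) :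
    finrank L (LinearMap.ker (dm v)) = r - 1 := by
  have h := (dm v).finrank_range_add_finrank_ker
  rw [LinearMap.range_eq_top.mpr (dm_surjective v hv), finrank_top, finrank_self] at h
  rw [Module.finrank_pi] at h
  simp at h
  omega

/-- If every covector annihilating `u` annihilates `u'`, then `u'` is a multiple of `u`. -/
lemma dm_prop (u u' : Fin r → L) (hu : u ≠ 0)
    (h : ∀ c, dm u c = 0 → dm u' c = 0) : u' ∈ Submodule.span L {u} := by
  obtain ⟨i, hi⟩ : ∃ i, u i ≠ 0 := by
    by_contra hh
    push_neg at hh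
    exact hu (funext hh)
  rw [Submodule.mem_span_singleton]
  refine ⟨u' i * (u i)⁻¹, ?_⟩
  funext j
  have hc : dm u ((Pi.single j 1 : Fin r → L)
      - (u j * (u i)⁻¹) • (Pi.single i 1 : Fin r → L)) = 0 := by
    rw [map_sub, map_smul, dm_single, dm_single]
    field_simp
    rw [smul_eq_mul, div_mul_cancel₀ (u j) hi, sub_self]
  have := h _ hc
  rw [map_sub, map_smul, dm_single, dm_single] at this
  have : u' j = u j * (u i)⁻¹ * u' i := by
    rw [sub_eq_zero] at this
    simpa using this
  rw [this]
  simp [mul_comm, mul_assoc, mul_left_comm]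

end Dot

section DotCard

variable {L : Type*} [Field L] [Fintype L] [DecidableEq L] {r : ℕ}

lemma card_dm_zero (u : Fin r → L) (hu : u ≠ 0) :
    (Finset.univ.filter (fun c => dm u c = 0)).card = Fintype.card L ^ (r - 1) := by
  classical
  have h1 : (Finset.univ.filter (fun c => dm u c = 0)).card
      = (Finset.univ.filter (· ∈ LinearMap.ker (dm u))).card := by
    congr 1
    ext c
    simp [LinearMap.mem_ker]
  rw [h1, card_filter_mem_submodule, finrank_ker_dm u hu]

lemma card_dm_zero₂ (u u' : Fin r → L) (hu : u ≠ 0)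
    (hu' : u' ∉ Submodule.span L {u}) :
    (Finset.univ.filter (fun c => dm u c = 0 ∧ dm u' c = 0)).card
      = Fintype.card L ^ (r - 2) := by
  classical
  set ψ : (LinearMap.ker (dm u)) →ₗ[L] L :=
    (dm u').comp (LinearMap.ker (dm u)).subtype with hψ
  have hne : ∃ c, dm u c = 0 ∧ dm u' c ≠ 0 := by
    by_contra h
    push_neg at h
    exact hu' (dm_prop u u' hu h)
  have hsurj : Function.Surjective ψ := by
    rw [← LinearMap.range_eq_top]
    rcases Ideal.eq_bot_or_top (LinearMap.range ψ) with h | h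
    · exfalso
      obtain ⟨c, hc0, hc1⟩ := hne
      have : ψ ⟨c, hc0⟩ ∈ LinearMap.range ψ := ⟨_, rfl⟩
      rw [h] at this
      simp only [Submodule.mem_bot] at this
      exact hc1 this
    · exact h
  have hker : finrank L (LinearMap.ker ψ) = r - 2 := by
    have h := ψ.finrank_range_add_finrank_ker
    rw [LinearMap.range_eq_top.mpr hsurj, finrank_top, finrank_self,
      finrank_ker_dm u hu] at h
    omega
  have hcardker : Fintype.card (LinearMap.ker ψ) = Fintype.card L ^ (r - 2) := by
    rw [card_eq_pow_finrank (K := L), hker]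
  rw [← Fintype.card_subtype, ← hcardker]
  refine Fintype.card_congr ?_
  exact ⟨fun c => ⟨⟨c.1, c.2.1⟩, c.2.2⟩, fun x => ⟨x.1.1, x.1.2, x.2⟩,
    fun x => rfl, fun c => rfl⟩

end DotCard

section Hyperplane

variable {L : Type*} [Field L] {r : ℕ}

lemma exists_covector (hr : 1 ≤ r) (H : Submodule L (Fin r → L))
    (hH : finrank L H = r - 1) :
    ∃ c : Fin r → L, c ≠ 0 ∧ H = LinearMap.ker (dm c) := by
  classical
  have hV : finrank L (Fin r → L) = r := by
    rw [Module.finrank_pi]; simp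
  have hq : finrank L ((Fin r → L) ⧸ H) = 1 := by
    have := H.finrank_quotient_add_finrank
    rw [hV, hH] at this
    omega
  obtain ⟨e⟩ : Nonempty (((Fin r → L) ⧸ H) ≃ₗ[L] L) :=
    FiniteDimensional.nonempty_linearEquiv_of_finrank_eq (by rw [hq, finrank_self])
  set ψ : (Fin r → L) →ₗ[L] L := e.toLinearMap ∘ₗ H.mkQ with hψdef
  set c : Fin r → L := fun i => ψ (Pi.single i 1) with hc
  have key : ∀ x, dm c x = ψ x := by
    intro x
    have h1 : dm c x = ∑ i, x i * ψ (Pi.single i 1) := rfl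
    have h2 : (∑ i, x i • (Pi.single i 1 : Fin r → L)) = x := by
      have h3 : ∀ i, x i • (Pi.single i 1 : Fin r → L) = Pi.single i (x i) := by
        intro i
        rw [← Pi.single_smul, smul_eq_mul, mul_one]
      simp_rw [h3]
      exact Finset.univ_sum_single x
    rw [h1]
    conv_rhs => rw [← h2]
    rw [map_sum]
    simp [smul_eq_mul]
  have hker : H = LinearMap.ker (dm c) := by
    ext x
    rw [LinearMap.mem_ker, key]
    constructor
    · intro hx
      simp [hψdef, (Submodule.Quotient.mk_eq_zero H).mpr hx]
    · intro hx
      simp only [hψdef, LinearMap.comp_apply] at hx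
      have h4 : H.mkQ x = 0 := e.injective (by simpa using hx)
      rwa [Submodule.mkQ_apply, Submodule.Quotient.mk_eq_zero] at h4
  refine ⟨c, ?_, hker⟩
  intro hc0
  have htop : H = ⊤ := by
    rw [hker]
    ext x
    simp [LinearMap.mem_ker, hc0, dm]
  rw [htop, finrank_top, hV] at hH
  omega

end Hyperplane

set_option maxHeartbeats 2000000 in
/-- If `U` is a maximum scattered `F_q`-subspace of dimension `m = rt/2` in `F_{q^t}^r`,
then every `F_{q^t}`-hyperplane `H` meets `U` in `F_q`-dimension `m - t` or `m - t + 1`;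
consequently `B(U)` is a two-intersection set with respect to hyperplanes, with
intersection numbers `(q^{m-t} - 1)/(q-1)` and `(q^{m-t+1} - 1)/(q-1)`. -/
theorem stmt14 (K L : Type*) [Field K] [Field L] [Algebra K L] [Fintype K]
    (r t : ℕ) (hr : 2 ≤ r) (ht : 2 ≤ t) (hKL : finrank K L = t)
    (m : ℕ) (U : Submodule K (Fin r → L)) (hU : finrank K U = m) (hm : 2 * m = r * t)
    (hscat : ∀ v : Fin r → L, v ≠ 0 →
      finrank K ↥(U ⊓ (Submodule.span L {v}).restrictScalars K) ≤ 1)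
    (H : Submodule L (Fin r → L)) (hH : finrank L H = r - 1) :
    (finrank K ↥(U ⊓ H.restrictScalars K) = m - t ∨
     finrank K ↥(U ⊓ H.restrictScalars K) = m - t + 1) ∧
    (Set.ncard {P : Submodule L (Fin r → L) |
        (∃ v : Fin r → L, v ≠ 0 ∧ P = Submodule.span L {v}) ∧ P ≤ H ∧
        ∃ u : Fin r → L, u ≠ 0 ∧ u ∈ U ∧ u ∈ P} * (Fintype.card K - 1)
        = Fintype.card K ^ (m - t) - 1 ∨
     Set.ncard {P : Submodule L (Fin r → L) |
        (∃ v : Fin r → L, v ≠ 0 ∧ P = Submodule.span L {v}) ∧ P ≤ H ∧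
        ∃ u : Fin r → L, u ≠ 0 ∧ u ∈ U ∧ u ∈ P} * (Fintype.card K - 1)
        = Fintype.card K ^ (m - t + 1) - 1) := by
  classical
  haveI : FiniteDimensional K L := FiniteDimensional.of_finrank_pos (by omega)
  haveI : Finite L := Module.finite_of_finite K
  haveI : Fintype L := Fintype.ofFinite L
  haveI : Module.Finite K (Fin r → L) := Module.Finite.trans L (Fin r → L)
  set q := Fintype.card K with hqdef
  have hq2 : 2 ≤ q := Fintype.one_lt_card
  have cardL : Fintype.card L = q ^ t := by
    rw [card_eq_pow_finrank (K := K) (V := L), hKL]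
  obtain ⟨s, rfl⟩ : ∃ s, r = s + 2 := ⟨r - 2, by omega⟩
  have h2 : 2 * m = s * t + 2 * t := by rw [hm]; ring
  obtain ⟨e, hme⟩ : ∃ e, m = e + t := ⟨m - t, by omega⟩
  have hst : s * t = 2 * e := by omega
  have hmte : m - t = e := by omega
  have hVr : finrank L (Fin (s + 2) → L) = s + 2 := by
    rw [Module.finrank_pi]; simp
  have hVK : finrank K (Fin (s + 2) → L) = 2 * e + 2 * t := by
    rw [← Module.finrank_mul_finrank K L (Fin (s + 2) → L), hKL, hVr]
    have h3 : t * (s + 2) = s * t + 2 * t := by ring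
    omega
  have hA : Fintype.card L ^ (s + 2 - 1) = q ^ (2 * e + t) := by
    rw [cardL, ← pow_mul]
    congr 1
    have h1 : s + 2 - 1 = s + 1 := rfl
    rw [h1]
    have h3 : t * (s + 1) = s * t + t := by ring
    omega
  have hB : Fintype.card L ^ (s + 2 - 2) = q ^ (2 * e) := by
    rw [cardL, ← pow_mul]
    congr 1
    have h1 : s + 2 - 2 = s := rfl
    rw [h1]
    have h3 : t * s = s * t := by ring
    omega
  have hC : Fintype.card L ^ (s + 2) = q ^ (2 * e + 2 * t) := by
    rw [cardL, ← pow_mul]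
    congr 1
    have h3 : t * (s + 2) = s * t + 2 * t := by ring
    omega
  -- restrictScalars finrank
  have hRS : ∀ W : Submodule L (Fin (s + 2) → L),
      finrank K ↥(W.restrictScalars K) = t * finrank L ↥W := by
    intro W
    have e1 : (↥(W.restrictScalars K)) ≃ₗ[K] ↥W :=
      (Submodule.restrictScalarsEquiv K L (Fin (s + 2) → L) W).restrictScalars K
    rw [e1.finrank_eq, ← Module.finrank_mul_finrank K L ↥W, hKL]
  -- the basic finsets
  set F0 : Finset (Fin (s + 2) → L) := Finset.univ.filter (fun u => u ∈ U ∧ u ≠ 0)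
    with hF0
  set Cs : Finset (Fin (s + 2) → L) := Finset.univ.filter (fun c => c ≠ 0) with hCs
  set nn : (Fin (s + 2) → L) → ℕ :=
    fun c => (F0.filter (fun u => dm c u = 0)).card with hnn
  set ww : (Fin (s + 2) → L) → ℕ :=
    fun c => finrank K ↥(U ⊓ (LinearMap.ker (dm c)).restrictScalars K) with hww
  have hF0card : F0.card = q ^ (e + t) - 1 := by
    rw [hF0, card_filter_mem_submodule_ne U, hU, hme]
  have hCscard : Cs.card = q ^ (2 * e + 2 * t) - 1 := by
    have h1 : Cs = Finset.univ.erase 0 := by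
      ext c
      simp [hCs, Finset.mem_erase]
    rw [h1, Finset.card_erase_of_mem (Finset.mem_univ 0), Finset.card_univ,
      Fintype.card_fun, Fintype.card_fin, hC]
  -- relating nn and ww
  have hnval : ∀ c : Fin (s + 2) → L, nn c = q ^ ww c - 1 := by
    intro c
    have h1 : F0.filter (fun u => dm c u = 0)
        = Finset.univ.filter
            (fun u => u ∈ (U ⊓ (LinearMap.ker (dm c)).restrictScalars K) ∧ u ≠ 0) := by
      ext u
      simp only [hF0, Finset.mem_filter, Finset.mem_univ, true_and,
        Submodule.mem_inf, Submodule.restrictScalars_mem, LinearMap.mem_ker]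
      tauto
    rw [hnn]
    simp only []
    rw [h1, card_filter_mem_submodule_ne]
  -- lower bound
  have hlow : ∀ c : Fin (s + 2) → L, c ≠ 0 → e ≤ ww c := by
    intro c hc
    have hkerK : finrank K ↥((LinearMap.ker (dm c)).restrictScalars K) = 2 * e + t := by
      rw [hRS, finrank_ker_dm c hc]
      have h1 : s + 2 - 1 = s + 1 := rfl
      rw [h1]
      have h3 : t * (s + 1) = s * t + t := by ring
      omega
    have hsum := Submodule.finrank_sup_add_finrank_inf_eq U
      ((LinearMap.ker (dm c)).restrictScalars K)
    have hle := Submodule.finrank_le (U ⊔ (LinearMap.ker (dm c)).restrictScalars K)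
    rw [hVK] at hle
    rw [hU, hkerK] at hsum
    rw [hww]
    simp only []
    omega
  -- scattered count
  have hspan : ∀ u : Fin (s + 2) → L, u ∈ U → u ≠ 0 →
      (Finset.univ.filter
        (fun x => x ∈ U ∧ x ≠ 0 ∧ x ∈ Submodule.span L {u})).card = q - 1 := by
    intro u huU hu0
    have hmem : u ∈ U ⊓ (Submodule.span L {u}).restrictScalars K :=
      ⟨huU, Submodule.mem_span_singleton_self u⟩
    have hfe : finrank K ↥(U ⊓ (Submodule.span L {u}).restrictScalars K) = 1 := by
      refine le_antisymm (hscat u hu0) ?_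
      have : Nontrivial ↥(U ⊓ (Submodule.span L {u}).restrictScalars K) :=
        ⟨⟨u, hmem⟩, 0, by simp [hu0, Subtype.ext_iff]⟩
      exact finrank_pos
    have h1 : Finset.univ.filter
        (fun x => x ∈ U ∧ x ≠ 0 ∧ x ∈ Submodule.span L {u})
        = Finset.univ.filter
            (fun x => x ∈ (U ⊓ (Submodule.span L {u}).restrictScalars K) ∧ x ≠ 0) := by
      ext x
      simp only [Finset.mem_filter, Finset.mem_univ, true_and,
        Submodule.mem_inf, Submodule.restrictScalars_mem]
      tauto
    rw [h1, card_filter_mem_submodule_ne, hfe, pow_one]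
  -- first moment
  have hsum1 : ∑ c ∈ Cs, nn c = (q ^ (e + t) - 1) * (q ^ (2 * e + t) - 1) := by
    have h1 : ∀ c, nn c = ∑ u ∈ F0, if dm c u = 0 then 1 else 0 := by
      intro c
      rw [hnn]
      simp only []
      rw [Finset.card_filter]
    calc ∑ c ∈ Cs, nn c
        = ∑ c ∈ Cs, ∑ u ∈ F0, if dm c u = 0 then 1 else 0 :=
          Finset.sum_congr rfl fun c _ => h1 c
      _ = ∑ u ∈ F0, ∑ c ∈ Cs, if dm c u = 0 then 1 else 0 := Finset.sum_comm
      _ = ∑ u ∈ F0, (Cs.filter (fun c => dm c u = 0)).card := by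
          refine Finset.sum_congr rfl fun u _ => ?_
          rw [Finset.card_filter]
      _ = ∑ u ∈ F0, (q ^ (2 * e + t) - 1) := by
          refine Finset.sum_congr rfl fun u hu => ?_
          have hu0 : u ≠ 0 := by
            rw [hF0] at hu
            simp at hu
            exact hu.2
          have heq : Cs.filter (fun c => dm c u = 0)
              = (Finset.univ.filter (fun c => dm u c = 0)).erase 0 := by
            ext c
            simp only [hCs, Finset.mem_filter, Finset.filter_filter, Finset.mem_univ,
              true_and, Finset.mem_erase]
            rw [dm_symm u c]
          rw [heq, Finset.card_erase_of_mem (by simp), card_dm_zero u hu0, hA]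
      _ = F0.card * (q ^ (2 * e + t) - 1) := by
          rw [Finset.sum_const, smul_eq_mul]
      _ = (q ^ (e + t) - 1) * (q ^ (2 * e + t) - 1) := by rw [hF0card]
  -- second moment
  have hqle : q ≤ q ^ (e + t) := by
    calc q = q ^ 1 := (pow_one q).symm
    _ ≤ q ^ (e + t) := Nat.pow_le_pow_right (by omega) (by omega)
  have hsum2 : ∑ c ∈ Cs, (nn c) ^ 2
      = (q ^ (e + t) - 1) * ((q - 1) * (q ^ (2 * e + t) - 1)
          + (q ^ (e + t) - q) * (q ^ (2 * e) - 1)) := by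
    have h1 : ∀ c, nn c = ∑ u ∈ F0, if dm c u = 0 then 1 else 0 := by
      intro c
      rw [hnn]
      simp only []
      rw [Finset.card_filter]
    have hsq : ∀ c, (nn c) ^ 2
        = ∑ p ∈ F0 ×ˢ F0, if dm c p.1 = 0 ∧ dm c p.2 = 0 then 1 else 0 := by
      intro c
      rw [sq, h1, Finset.sum_mul_sum, ← Finset.sum_product']
      refine Finset.sum_congr rfl fun p _ => ?_
      by_cases hP : dm c p.1 = 0 <;> by_cases hQ : dm c p.2 = 0 <;> simp [hP, hQ]
    calc ∑ c ∈ Cs, (nn c) ^ 2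
        = ∑ c ∈ Cs, ∑ p ∈ F0 ×ˢ F0, (if dm c p.1 = 0 ∧ dm c p.2 = 0 then 1 else 0) :=
          Finset.sum_congr rfl fun c _ => hsq c
      _ = ∑ p ∈ F0 ×ˢ F0, ∑ c ∈ Cs, (if dm c p.1 = 0 ∧ dm c p.2 = 0 then 1 else 0) :=
          Finset.sum_comm
      _ = ∑ p ∈ F0 ×ˢ F0, (Cs.filter
            (fun c => dm c p.1 = 0 ∧ dm c p.2 = 0)).card := by
          refine Finset.sum_congr rfl fun p _ => ?_
          rw [Finset.card_filter]
      _ = ∑ p ∈ F0 ×ˢ F0, (if p.2 ∈ Submodule.span L {p.1}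
            then q ^ (2 * e + t) - 1 else q ^ (2 * e) - 1) := by
          refine Finset.sum_congr rfl fun p hp => ?_
          obtain ⟨hp1, hp2⟩ := Finset.mem_product.mp hp
          rw [hF0] at hp1 hp2
          simp only [Finset.mem_filter, Finset.mem_univ, true_and] at hp1 hp2
          by_cases hdep : p.2 ∈ Submodule.span L {p.1}
          · rw [if_pos hdep]
            obtain ⟨a, ha⟩ := Submodule.mem_span_singleton.mp hdep
            have heq : Cs.filter (fun c => dm c p.1 = 0 ∧ dm c p.2 = 0)
                = (Finset.univ.filter (fun c => dm p.1 c = 0)).erase 0 := by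
              ext c
              simp only [hCs, Finset.mem_filter, Finset.filter_filter, Finset.mem_univ,
                true_and, Finset.mem_erase]
              rw [dm_symm p.1 c]
              constructor
              · rintro ⟨hc0, hcu, _⟩
                exact ⟨hc0, hcu⟩
              · rintro ⟨hc0, hcu⟩
                refine ⟨hc0, hcu, ?_⟩
                rw [← ha, map_smul, hcu, smul_zero]
            rw [heq, Finset.card_erase_of_mem (by simp), card_dm_zero p.1 hp1.2, hA]
          · rw [if_neg hdep]
            have heq : Cs.filter (fun c => dm c p.1 = 0 ∧ dm c p.2 = 0)
                = (Finset.univ.filter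
                    (fun c => dm p.1 c = 0 ∧ dm p.2 c = 0)).erase 0 := by
              ext c
              simp only [hCs, Finset.mem_filter, Finset.filter_filter, Finset.mem_univ,
                true_and, Finset.mem_erase]
              rw [dm_symm p.1 c, dm_symm p.2 c]
            rw [heq, Finset.card_erase_of_mem (by simp),
              card_dm_zero₂ p.1 p.2 hp1.2 hdep, hB]
      _ = ∑ u ∈ F0, ∑ u' ∈ F0, (if u' ∈ Submodule.span L {u}
            then q ^ (2 * e + t) - 1 else q ^ (2 * e) - 1) := by
          rw [Finset.sum_product]
      _ = ∑ u ∈ F0, ((q - 1) * (q ^ (2 * e + t) - 1)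
            + (q ^ (e + t) - q) * (q ^ (2 * e) - 1)) := by
          refine Finset.sum_congr rfl fun u hu => ?_
          rw [hF0] at hu
          simp only [Finset.mem_filter, Finset.mem_univ, true_and] at hu
          rw [Finset.sum_ite, Finset.sum_const, Finset.sum_const, smul_eq_mul,
            smul_eq_mul]
          have hdepcard : (F0.filter (fun u' => u' ∈ Submodule.span L {u})).card
              = q - 1 := by
            have h2 : F0.filter (fun u' => u' ∈ Submodule.span L {u})
                = Finset.univ.filter
                    (fun x => x ∈ U ∧ x ≠ 0 ∧ x ∈ Submodule.span L {u}) := by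
              ext x
              simp only [hF0, Finset.mem_filter, Finset.filter_filter, Finset.mem_univ,
                true_and]
              tauto
            rw [h2, hspan u hu.1 hu.2]
          have hsplit := Finset.card_filter_add_card_filter_not
            (s := F0) (p := fun u' => u' ∈ Submodule.span L {u})
          have hnotdep : (F0.filter (fun u' => ¬ u' ∈ Submodule.span L {u})).card
              = q ^ (e + t) - q := by
            rw [hF0card] at hsplit
            omega
          rw [hdepcard, hnotdep]
      _ = F0.card * ((q - 1) * (q ^ (2 * e + t) - 1)
            + (q ^ (e + t) - q) * (q ^ (2 * e) - 1)) := by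
          rw [Finset.sum_const, smul_eq_mul]
      _ = _ := by rw [hF0card]
  -- cast to integers
  have hone_le : ∀ k : ℕ, 1 ≤ q ^ k := fun k => Nat.one_le_pow k q (by omega)
  have hz1 : (∑ c ∈ Cs, (nn c : ℤ))
      = ((q : ℤ) ^ (e + t) - 1) * ((q : ℤ) ^ (2 * e + t) - 1) := by
    rw [← Nat.cast_sum, hsum1, Nat.cast_mul, Nat.cast_sub (hone_le _),
      Nat.cast_sub (hone_le _)]
    push_cast
    ring
  have hz2 : (∑ c ∈ Cs, ((nn c : ℤ)) ^ 2)
      = ((q : ℤ) ^ (e + t) - 1) * (((q : ℤ) - 1) * ((q : ℤ) ^ (2 * e + t) - 1)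
          + ((q : ℤ) ^ (e + t) - (q : ℤ)) * ((q : ℤ) ^ (2 * e) - 1)) := by
    have h0 : ∑ c ∈ Cs, ((nn c : ℤ)) ^ 2 = ((∑ c ∈ Cs, (nn c) ^ 2 : ℕ) : ℤ) := by
      push_cast
      rfl
    rw [h0, hsum2, Nat.cast_mul, Nat.cast_add, Nat.cast_mul, Nat.cast_mul,
      Nat.cast_sub (hone_le _), Nat.cast_sub (by omega : 1 ≤ q),
      Nat.cast_sub (hone_le _), Nat.cast_sub hqle, Nat.cast_sub (hone_le _)]
    push_cast
    ring
  have hz3 : (Cs.card : ℤ) = (q : ℤ) ^ (2 * e + 2 * t) - 1 := by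
    rw [hCscard, Nat.cast_sub (hone_le _)]
    push_cast
    ring
  have hZsum : ∑ c ∈ Cs, ((nn c : ℤ) - ((q : ℤ) ^ e - 1))
      * ((nn c : ℤ) - ((q : ℤ) ^ (e + 1) - 1)) = 0 := by
    have hexp : ∀ x : ℤ, (x - ((q : ℤ) ^ e - 1)) * (x - ((q : ℤ) ^ (e + 1) - 1))
        = x ^ 2 - (((q : ℤ) ^ e - 1) + ((q : ℤ) ^ (e + 1) - 1)) * x
          + ((q : ℤ) ^ e - 1) * ((q : ℤ) ^ (e + 1) - 1) := by
      intro x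
      ring
    simp_rw [hexp]
    rw [Finset.sum_add_distrib, Finset.sum_sub_distrib, ← Finset.mul_sum,
      Finset.sum_const, nsmul_eq_mul, hz1, hz2, hz3]
    have hp1 : (q : ℤ) ^ (e + t) = (q : ℤ) ^ e * (q : ℤ) ^ t := by rw [pow_add]
    have hp2 : (q : ℤ) ^ (2 * e + t) = ((q : ℤ) ^ e) ^ 2 * (q : ℤ) ^ t := by
      rw [pow_add, mul_comm 2 e, pow_mul]
    have hp3 : (q : ℤ) ^ (2 * e) = ((q : ℤ) ^ e) ^ 2 := by
      rw [mul_comm 2 e, pow_mul]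
    have hp4 : (q : ℤ) ^ (2 * e + 2 * t) = ((q : ℤ) ^ e) ^ 2 * ((q : ℤ) ^ t) ^ 2 := by
      rw [pow_add, mul_comm 2 e, pow_mul, mul_comm 2 t, pow_mul]
    have hp5 : (q : ℤ) ^ (e + 1) = (q : ℤ) ^ e * (q : ℤ) := by rw [pow_succ]
    rw [hp1, hp2, hp3, hp4, hp5]
    ring
  have hcastn : ∀ c : Fin (s + 2) → L, (nn c : ℤ) = (q : ℤ) ^ (ww c) - 1 := by
    intro c
    rw [hnval c, Nat.cast_sub (hone_le _)]
    push_cast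
    ring
  have hnonneg : ∀ c ∈ Cs, (0 : ℤ) ≤ ((nn c : ℤ) - ((q : ℤ) ^ e - 1))
      * ((nn c : ℤ) - ((q : ℤ) ^ (e + 1) - 1)) := by
    intro c hc
    have hc0 : c ≠ 0 := by
      rw [hCs] at hc
      simpa using hc
    have hle := hlow c hc0
    rcases Nat.lt_or_ge (ww c) (e + 1) with hcase | hcase
    · have hwe : ww c = e := by omega
      rw [hcastn c, hwe]
      simp
    · have hq1 : (1 : ℤ) ≤ (q : ℤ) := by exact_mod_cast (by omega : 1 ≤ q)
      have h1 : (q : ℤ) ^ (e + 1) ≤ (q : ℤ) ^ (ww c) := pow_le_pow_right₀ hq1 hcase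
      have h2 : (q : ℤ) ^ e ≤ (q : ℤ) ^ (ww c) := pow_le_pow_right₀ hq1 (by omega)
      rw [hcastn c]
      exact mul_nonneg (by linarith) (by linarith)
  have hwc : ∀ c : Fin (s + 2) → L, c ≠ 0 → ww c = e ∨ ww c = e + 1 := by
    intro c hc0
    have hc : c ∈ Cs := by
      rw [hCs]
      simp [hc0]
    have hterm := (Finset.sum_eq_zero_iff_of_nonneg hnonneg).mp hZsum c hc
    rcases mul_eq_zero.mp hterm with h | h
    · left
      have hpow : (q : ℤ) ^ (ww c) = (q : ℤ) ^ e := by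
        rw [hcastn c] at h
        linarith
      have hpn : q ^ (ww c) = q ^ e := by exact_mod_cast hpow
      exact Nat.pow_right_injective hq2 hpn
    · right
      have hpow : (q : ℤ) ^ (ww c) = (q : ℤ) ^ (e + 1) := by
        rw [hcastn c] at h
        linarith
      have hpn : q ^ (ww c) = q ^ (e + 1) := by exact_mod_cast hpow
      exact Nat.pow_right_injective hq2 hpn
  -- apply to the given hyperplane H
  obtain ⟨c, hc0, hHk⟩ := exists_covector (by omega) H hH
  have hUH : U ⊓ H.restrictScalars K = U ⊓ (LinearMap.ker (dm c)).restrictScalars K := by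
    rw [hHk]
  have hpart1 : finrank K ↥(U ⊓ H.restrictScalars K) = e ∨
      finrank K ↥(U ⊓ H.restrictScalars K) = e + 1 := by
    rw [hUH]
    exact hwc c hc0
  constructor
  · rw [hmte]
    exact hpart1
  · -- part 2 : point counting
    set w := finrank K ↥(U ⊓ H.restrictScalars K) with hwdef
    set FH : Finset (Fin (s + 2) → L) := Finset.univ.filter
      (fun u => u ∈ (U ⊓ H.restrictScalars K) ∧ u ≠ 0) with hFH
    have hFHmem : ∀ u, u ∈ FH ↔ u ∈ U ∧ u ∈ H ∧ u ≠ 0 := by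
      intro u
      rw [hFH]
      simp only [Finset.mem_filter, Finset.mem_univ, true_and, Submodule.mem_inf,
        Submodule.restrictScalars_mem]
      tauto
    have hFHcard : FH.card = q ^ w - 1 := by
      rw [hwdef, hFH]
      exact card_filter_mem_submodule_ne _
    set f : (Fin (s + 2) → L) → Submodule L (Fin (s + 2) → L) :=
      fun u => Submodule.span L {u} with hf
    set S : Set (Submodule L (Fin (s + 2) → L)) := {P : Submodule L (Fin (s + 2) → L) |
        (∃ v : Fin (s + 2) → L, v ≠ 0 ∧ P = Submodule.span L {v}) ∧ P ≤ H ∧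
        ∃ u : Fin (s + 2) → L, u ≠ 0 ∧ u ∈ U ∧ u ∈ P} with hS
    have hSim : S = ↑(FH.image f) := by
      ext P
      rw [hS]
      simp only [Set.mem_setOf_eq, Finset.coe_image, Set.mem_image, Finset.mem_coe]
      constructor
      · rintro ⟨⟨v, hv0, rfl⟩, hPH, u, hu0, huU, huP⟩
        refine ⟨u, (hFHmem u).mpr ⟨huU, hPH huP, hu0⟩, ?_⟩
        obtain ⟨a, rfl⟩ := Submodule.mem_span_singleton.mp huP
        have ha0 : a ≠ 0 := by
          rintro rfl
          simp at hu0
        rw [hf]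
        exact Submodule.span_singleton_smul_eq (isUnit_iff_ne_zero.mpr ha0) v
      · rintro ⟨u, huFH, rfl⟩
        obtain ⟨huU, huH, hu0⟩ := (hFHmem u).mp huFH
        refine ⟨⟨u, hu0, by rw [hf]⟩, ?_, u, hu0, huU, ?_⟩
        · rw [hf, Submodule.span_le]
          simpa using huH
        · rw [hf]
          exact Submodule.mem_span_singleton_self u
    have hfiber : ∀ P ∈ FH.image f, (FH.filter (fun u => f u = P)).card = q - 1 := by
      intro P hP
      obtain ⟨u0, hu0FH, rfl⟩ := Finset.mem_image.mp hP
      obtain ⟨hu0U, hu0H, hu00⟩ := (hFHmem u0).mp hu0FH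
      have h1 : FH.filter (fun u => f u = f u0)
          = Finset.univ.filter
              (fun x => x ∈ U ∧ x ≠ 0 ∧ x ∈ Submodule.span L {u0}) := by
        ext x
        simp only [Finset.mem_filter, Finset.mem_univ, true_and]
        constructor
        · rintro ⟨hxFH, hfx⟩
          obtain ⟨hxU, hxH, hx0⟩ := (hFHmem x).mp hxFH
          refine ⟨hxU, hx0, ?_⟩
          rw [hf] at hfx
          have hxx : x ∈ Submodule.span L {x} := Submodule.mem_span_singleton_self x
          rw [show Submodule.span L {x} = Submodule.span L {u0} from hfx] at hxx
          exact hxx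
        · rintro ⟨hxU, hx0, hxs⟩
          obtain ⟨a, rfl⟩ := Submodule.mem_span_singleton.mp hxs
          have ha0 : a ≠ 0 := by
            rintro rfl
            simp at hx0
          refine ⟨(hFHmem _).mpr ⟨hxU, H.smul_mem a hu0H, hx0⟩, ?_⟩
          rw [hf]
          exact Submodule.span_singleton_smul_eq (isUnit_iff_ne_zero.mpr ha0) u0
      rw [h1, hspan u0 hu0U hu00]
    have hkey : FH.card = (FH.image f).card * (q - 1) := by
      rw [Finset.card_eq_sum_card_image f FH, Finset.sum_congr rfl hfiber,
        Finset.sum_const, smul_eq_mul]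
    have hncard : S.ncard = (FH.image f).card := by
      rw [hSim, Set.ncard_coe_finset]
    have hfinal : S.ncard * (q - 1) = q ^ w - 1 := by
      rw [hncard, ← hkey, hFHcard]
    rcases hpart1 with hw | hw
    · left
      rw [hmte, ← hw]
      exact hfinal
    · right
      rw [hmte, ← hw]
      exact hfinal
end

section
/- Let f : F_{q^t} → F_{q^t} be an F_q-linear map and U = {(x, f(x)) : x ∈ F_{q^t}} ⊆ F_{q^t}^2. Then U is scattered with respect to the Desarguesian spread of F_{q^t}^2 if and only if for all a, b ∈ F_{q^t} not both zero, the F_q-linear map x ↦ ax + bf(x) has rank at least t - 1 (i.e., kernel of dimension at most 1). -/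
open Module

/-- Sheekey's criterion: `U = {(x, f(x))}` is scattered with respect to the
Desarguesian spread of `F_{q^t}^2` if and only if for all `a, b` not both zero, the
`F_q`-linear map `x ↦ a·x + b·f(x)` has kernel of dimension at most 1 (i.e. rank at
least `t - 1`). -/
theorem stmt15 (K L : Type*) [Field K] [Field L] [Algebra K L] [Fintype K]
    (t : ℕ) (ht : 1 ≤ t) (hKL : finrank K L = t)
    (f : L →ₗ[K] L)
    (U : Submodule K (L × L))
    (hU : (U : Set (L × L)) = {p | ∃ x : L, p = (x, f x)}) :
    (∀ v : L × L, v ≠ 0 →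
      finrank K ↥(U ⊓ (Submodule.span L {v}).restrictScalars K) ≤ 1) ↔
    (∀ a b : L, ¬(a = 0 ∧ b = 0) →
      finrank K (LinearMap.ker
        (LinearMap.mulLeft K a + (LinearMap.mulLeft K b).comp f)) ≤ 1) := by
  have hfd : FiniteDimensional K L := FiniteDimensional.of_finrank_pos (hKL ▸ ht)
  constructor
  · intro h a b hab
    set g := LinearMap.mulLeft K a + (LinearMap.mulLeft K b).comp f with hg
    have hv : ((b, -a) : L × L) ≠ 0 := by
      intro h0
      rw [Prod.ext_iff] at h0
      exact hab ⟨by simpa using h0.2, by simpa using h0.1⟩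
    set D := (Submodule.span L {((b, -a) : L × L)}).restrictScalars K with hD
    have hmem : ∀ x : ↥(LinearMap.ker g),
        ((x : L), f x) ∈ U ⊓ D := by
      rintro ⟨x, hx⟩
      have hx' : a * x + b * f x = 0 := by
        simpa [hg, LinearMap.mem_ker] using hx
      refine Submodule.mem_inf.2 ⟨?_, ?_⟩
      · show ((x : L), f x) ∈ (U : Set (L × L))
        rw [hU]; exact ⟨x, rfl⟩
      · show ((x : L), f x) ∈ Submodule.span L {((b, -a) : L × L)}
        by_cases hb : b = 0
        · have ha : a ≠ 0 := fun h0 => hab ⟨h0, hb⟩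
          have hx0 : x = 0 := by
            have : a * x = 0 := by simpa [hb] using hx'
            exact (mul_eq_zero.1 this).resolve_left ha
          simp [hx0]
          exact Submodule.zero_mem _
        · refine Submodule.mem_span_singleton.2 ⟨x / b, ?_⟩
          have hfx : f x = -(a * x) / b := by
            rw [eq_div_iff hb]; linear_combination hx'
          rw [Prod.smul_mk]
          simp only [smul_eq_mul, Prod.mk.injEq]
          refine ⟨div_mul_cancel₀ x hb, ?_⟩
          rw [hfx]; ring
    let F : ↥(LinearMap.ker g) →ₗ[K] L × L :=
      (LinearMap.id.prod f).comp (LinearMap.ker g).subtype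
    let ψ : ↥(LinearMap.ker g) →ₗ[K] ↥(U ⊓ D) :=
      F.codRestrict _ hmem
    have hinj : Function.Injective ψ := by
      intro x y hxy
      have h1 : (F x : L × L) = F y := congrArg Subtype.val hxy
      have : (x : L) = (y : L) := congrArg Prod.fst h1
      exact Subtype.ext this
    exact le_trans (LinearMap.finrank_le_finrank_of_injective hinj) (h (b, -a) hv)
  · intro h v hv
    have hab : ¬((-v.2 : L) = 0 ∧ (v.1 : L) = 0) := by
      rintro ⟨h2, h1⟩
      exact hv (Prod.ext h1 (by simpa using h2))
    set g := LinearMap.mulLeft K (-v.2) + (LinearMap.mulLeft K v.1).comp f with hg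
    set D := (Submodule.span L {v}).restrictScalars K with hD
    have hmem : ∀ p : ↥(U ⊓ D), (p : L × L).1 ∈ LinearMap.ker g := by
      rintro ⟨p, hpU, hpD⟩
      obtain ⟨x, hx⟩ : ∃ x : L, p = (x, f x) := by
        have h' : p ∈ (U : Set (L × L)) := hpU
        rw [hU] at h'; exact h'
      obtain ⟨c, hc⟩ := Submodule.mem_span_singleton.1
        (show p ∈ Submodule.span L {v} from hpD)
      have h1 : x = c * v.1 := by
        have h' := congrArg Prod.fst hc
        rw [hx] at h'
        simpa [smul_eq_mul] using h'.symm
      have h2 : f x = c * v.2 := by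
        have h' := congrArg Prod.snd hc
        rw [hx] at h'
        simpa [smul_eq_mul] using h'.symm
      show g p.1 = 0
      rw [hx]
      simp only [hg, LinearMap.add_apply, LinearMap.comp_apply, LinearMap.mulLeft_apply]
      rw [h2, h1]
      ring
    let φ : ↥(U ⊓ D) →ₗ[K] ↥(LinearMap.ker g) :=
      ((LinearMap.fst K L L).comp (U ⊓ D).subtype).codRestrict _ hmem
    have hinj : Function.Injective φ := by
      rintro ⟨p, hpU, hpD⟩ ⟨q, hqU, hqD⟩ hpq
      have h1 : p.1 = q.1 := congrArg Subtype.val hpq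
      obtain ⟨x, hx⟩ : ∃ x : L, p = (x, f x) := by
        have h' : p ∈ (U : Set (L × L)) := hpU
        rw [hU] at h'; exact h'
      obtain ⟨y, hy⟩ : ∃ y : L, q = (y, f y) := by
        have h' : q ∈ (U : Set (L × L)) := hqU
        rw [hU] at h'; exact h'
      have hxy : x = y := by rw [hx, hy] at h1; exact h1
      apply Subtype.ext
      show p = q
      rw [hx, hy, hxy]
    exact le_trans (LinearMap.finrank_le_finrank_of_injective hinj)
      (h (-v.2) v.1 hab)
end

section
/- Let U be a scattered F_q-subspace of dimension m with respect to the Desarguesian t-spread of F_q^{rt} ≅ F_{q^t}^r. Then every F_{q^t}-subspace W of F_{q^t}^r with dim_{F_{q^t}} W = (rt - m + k)/t (where 1 ≤ k ≤ m and t divides m - k) satisfies: the number of points of B(U) contained in the projective subspace PG(W) is at least (q^k - 1)/(q - 1). In particular B(U) is a ((q^k - 1)/(q-1))-fold blocking set with respect to these subspaces. -/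
open Module

/-- Scattered subspaces give multiple blocking sets: if `U` is a scattered
`F_q`-subspace of dimension `m` w.r.t. the Desarguesian `t`-spread of `F_{q^t}^r`, and
`W` is an `F_{q^t}`-subspace with `dim_{F_{q^t}} W = (rt - m + k)/t` where `1 ≤ k ≤ m`
and `t ∣ (m - k)`, then the projective subspace `PG(W)` contains at least
`(q^k - 1)/(q - 1)` points of the linear set `B(U)` (stated multiplicatively). -/
theorem stmt17 (K L : Type*) [Field K] [Field L] [Algebra K L] [Fintype K]
    (r t : ℕ) (hr : 2 ≤ r) (ht : 2 ≤ t) (hKL : finrank K L = t)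
    (m k : ℕ) (hk1 : 1 ≤ k) (hkm : k ≤ m) (hdvd : t ∣ (m - k))
    (U : Submodule K (Fin r → L)) (hU : finrank K U = m)
    (hscat : ∀ v : Fin r → L, v ≠ 0 →
      finrank K ↥(U ⊓ (Submodule.span L {v}).restrictScalars K) ≤ 1)
    (W : Submodule L (Fin r → L)) (hW : t * finrank L W = r * t - m + k) :
    Fintype.card K ^ k - 1 ≤
      Set.ncard {P : Submodule L (Fin r → L) |
        (∃ v : Fin r → L, v ≠ 0 ∧ P = Submodule.span L {v}) ∧ P ≤ W ∧
        ∃ u : Fin r → L, u ≠ 0 ∧ u ∈ U ∧ u ∈ P} * (Fintype.card K - 1) := by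
  classical
  have hLfin : Module.Finite K L := Module.finite_of_finrank_pos (by rw [hKL]; omega)
  have hLfinite : Finite L := Module.finite_of_finite K
  have : Fintype L := Fintype.ofFinite L
  set q := Fintype.card K with hq
  have hq2 : 2 ≤ q := Fintype.one_lt_card
  -- ambient dimension
  have hamb : finrank K (Fin r → L) = r * t := by
    rw [Module.finrank_pi_fintype, Finset.sum_congr rfl (fun i _ => hKL)]
    simp [mul_comm]
  set W' := W.restrictScalars K with hW'def
  have hWdim : finrank K W' = r * t - m + k := by
    have h1 : finrank K L * finrank L W = finrank K W' :=
      Module.finrank_mul_finrank K L W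
    rw [hKL] at h1
    omega
  have hm_le : m ≤ r * t := by
    have := hU ▸ U.finrank_le
    omega
  have hsup : finrank K ↥(U ⊔ W') ≤ r * t := by
    have := (U ⊔ W').finrank_le
    omega
  have hsum := Submodule.finrank_sup_add_finrank_inf_eq U W'
  have hk' : k ≤ finrank K ↥(U ⊓ W') := by omega
  -- counting
  let f : (Fin r → L) → Submodule L (Fin r → L) := fun u => Submodule.span L {u}
  let s : Finset (Fin r → L) := Finset.univ.filter (fun u => u ∈ U ∧ u ∈ W ∧ u ≠ 0)
  -- generic counting of nonzero elements of a K-submodule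
  have hcard : ∀ V : Submodule K (Fin r → L),
      (Finset.univ.filter (fun u => u ∈ V)).card = q ^ finrank K V := by
    intro V
    rw [← Fintype.card_subtype]
    exact card_eq_pow_finrank
  have hs_card : s.card = q ^ finrank K ↥(U ⊓ W') - 1 := by
    have hseq : s = (Finset.univ.filter (fun u => u ∈ U ⊓ W')).erase 0 := by
      ext u
      simp only [s, Finset.mem_filter, Finset.mem_erase, Finset.mem_univ, true_and,
        Submodule.mem_inf, hW'def, Submodule.restrictScalars_mem]
      tauto
    rw [hseq, Finset.card_erase_of_mem (by simp), hcard]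
  -- fibers of f on s have at most q - 1 elements
  have hfiber : ∀ P ∈ s.image f, (s.filter (fun u => f u = P)).card ≤ q - 1 := by
    intro P hP
    obtain ⟨u₀, hu₀, rfl⟩ := Finset.mem_image.mp hP
    simp only [s, Finset.mem_filter, Finset.mem_univ, true_and] at hu₀
    have hsc := hscat u₀ hu₀.2.2
    have hsub : s.filter (fun u => f u = f u₀) ⊆
        (Finset.univ.filter
          (fun u => u ∈ U ⊓ (Submodule.span L {u₀}).restrictScalars K)).erase 0 := by
      intro u hu
      simp only [s, Finset.mem_filter, Finset.mem_univ, true_and] at hu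
      simp only [Finset.mem_erase, Finset.mem_filter, Finset.mem_univ, true_and,
        Submodule.mem_inf, Submodule.restrictScalars_mem]
      refine ⟨hu.1.2.2, hu.1.1, ?_⟩
      have h2 : Submodule.span L {u} = Submodule.span L {u₀} := hu.2
      exact h2 ▸ Submodule.mem_span_singleton_self u
    calc (s.filter (fun u => f u = f u₀)).card
        ≤ _ := Finset.card_le_card hsub
      _ ≤ q ^ finrank K ↥(U ⊓ (Submodule.span L {u₀}).restrictScalars K) - 1 := by
          rw [Finset.card_erase_of_mem (by simp), hcard]
      _ ≤ q ^ 1 - 1 := by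
          have := Nat.pow_le_pow_right (by omega : 1 ≤ q) hsc
          omega
      _ = q - 1 := by rw [pow_one]
  have hmain : s.card ≤ (q - 1) * (s.image f).card :=
    Finset.card_le_mul_card_image s (q - 1) hfiber
  -- the point set equals the image
  have hSeq : {P : Submodule L (Fin r → L) |
        (∃ v : Fin r → L, v ≠ 0 ∧ P = Submodule.span L {v}) ∧ P ≤ W ∧
        ∃ u : Fin r → L, u ≠ 0 ∧ u ∈ U ∧ u ∈ P} = ↑(s.image f) := by
    ext P
    simp only [Set.mem_setOf_eq, Finset.coe_image, Set.mem_image, Finset.mem_coe,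
      Finset.mem_filter, Finset.mem_univ, true_and, s]
    constructor
    · rintro ⟨⟨v, hv, rfl⟩, hPW, u, hu0, huU, huP⟩
      refine ⟨u, ⟨huU, hPW huP, hu0⟩, ?_⟩
      obtain ⟨c, rfl⟩ := Submodule.mem_span_singleton.mp huP
      have hc : c ≠ 0 := by rintro rfl; simp at hu0
      exact (Submodule.span_singleton_smul_eq (IsUnit.mk0 c hc) v).symm ▸ rfl
    · rintro ⟨u, ⟨huU, huW, hu0⟩, rfl⟩
      refine ⟨⟨u, hu0, rfl⟩, ?_, u, hu0, huU, Submodule.mem_span_singleton_self u⟩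
      rw [Submodule.span_le, Set.singleton_subset_iff]
      exact huW
  rw [hSeq, Set.ncard_coe_finset]
  have hpow : q ^ k ≤ q ^ finrank K ↥(U ⊓ W') :=
    Nat.pow_le_pow_right (by omega) hk'
  calc q ^ k - 1 ≤ q ^ finrank K ↥(U ⊓ W') - 1 := by omega
    _ = s.card := hs_card.symm
    _ ≤ (q - 1) * (s.image f).card := hmain
    _ = (s.image f).card * (q - 1) := Nat.mul_comm _ _
end
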